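/- For r > |s| one has the exact upper bound √(r² − 2 r s sinθ + s²) ≤ r − s sinθ + s²(1 − sin²θ)/(2(r − |s|)), i.e., the Fresnel approximation of the element distance is controlled quantitatively. -/

import Mathlib

/-! Writing `u = sin θ`, the radicand is `(r - s u)² + s²(1 - u²)`, and `√(a² + b) ≤ a + b / (2a)`
is the tangent-line bound for the concave square root at `a²`. Since `|s u| ≤ |s|`, the base point
`a = r - s u` is at least `r - |s| > 0`, which gives the denominator of the bound. -/

namespace Real

theorem sqrt_sq_add_le_add_div {a b : ℝ} (ha : 0 < a) (hb : 0 ≤ b) :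
    √(a ^ 2 + b) ≤ a + b / (2 * a) := by
  rw [sqrt_le_left (by positivity)]
  have hcancel : 2 * a * (b / (2 * a)) = b := mul_div_cancel₀ b (by positivity)
  nlinarith [sq_nonneg (b / (2 * a))]

theorem mul_sin_le_abs (s θ : ℝ) : s * sin θ ≤ |s| :=
  calc s * sin θ ≤ |s * sin θ| := le_abs_self _
    _ = |s| * |sin θ| := abs_mul s (sin θ)
    _ ≤ |s| := mul_le_of_le_one_right (abs_nonneg s) (abs_sin_le_one θ)

end Real

/-- Quantitative control of the Fresnel approximation of the element distance:
for `r > |s|`, `√(r² - 2rs sin θ + s²) ≤ r - s sin θ + s²(1 - sin² θ)/(2(r - |s|))`. -/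
theorem fresnel_distance_upper_bound (r s θ : ℝ) (h : |s| < r) :
    Real.sqrt (r ^ 2 - 2 * r * s * Real.sin θ + s ^ 2) ≤
      r - s * Real.sin θ + s ^ 2 * (1 - Real.sin θ ^ 2) / (2 * (r - |s|)) := by
  have hsin : r - |s| ≤ r - s * Real.sin θ := by linarith [Real.mul_sin_le_abs s θ]
  have hbase : 0 < r - |s| := by linarith
  have hdefect : 0 ≤ s ^ 2 * (1 - Real.sin θ ^ 2) :=
    mul_nonneg (sq_nonneg s) (sub_nonneg.mpr (Real.sin_sq_le_one θ))
  calc Real.sqrt (r ^ 2 - 2 * r * s * Real.sin θ + s ^ 2)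
      = Real.sqrt ((r - s * Real.sin θ) ^ 2 + s ^ 2 * (1 - Real.sin θ ^ 2)) := by ring_nf
    _ ≤ r - s * Real.sin θ + s ^ 2 * (1 - Real.sin θ ^ 2) / (2 * (r - s * Real.sin θ)) :=
        Real.sqrt_sq_add_le_add_div (hbase.trans_le hsin) hdefect
    _ ≤ r - s * Real.sin θ + s ^ 2 * (1 - Real.sin θ ^ 2) / (2 * (r - |s|)) := by gcongr
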